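/- arXiv:1608.06959 — 7 statements merged into one kernel-verified Lean document; each statement's English description precedes it below -/
import Mathlib

section
/- Let f : [0,∞) → [0,∞) be a neoclassical production function that is twice differentiable on (0,∞) with f' strictly decreasing, and let α_i, α_j : [0,∞) → (0,1) be continuous strictly increasing discount factor functions with α_i(c) ≥ α_j(c) for all c ≥ 0. Let (c̄^i, c̄^j, k̄) with c̄^i, c̄^j, k̄ > 0 be a stationary open-loop equilibrium, i.e. α_i(c̄^i)·f'(k̄) = 1, α_j(c̄^j)·f'(k̄) = 1, and k̄ = f(k̄) − c̄^i − c̄^j. Let k_a^i, k_a^j > 0 be autarky stationary equilibria, i.e. α_i(c_a^i)·f'(k_a^i) = 1 and α_j(c_a^j)·f'(k_a^j) = 1 with c_a^i = f(k_a^i) − k_a^i > 0 and c_a^j = f(k_a^j) − k_a^j > 0. Assume local regularity in the form that the maps k ↦ α_i(f(k) − k)·f'(k) and k ↦ α_j(f(k) − k)·f'(k) are strictly decreasing on an interval containing k̄, k_a^i and k_a^j. Then: (i) c̄^i ≤ c̄^j; (ii) k̄ ≤ k_a^j ≤ k_a^i; (iii) c̄^i ≤ c_a^i and c̄^j ≤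 c_a^j. -/
/-- Comparison of a stationary open-loop equilibrium with the autarky
stationary equilibria under local regularity (Proposition `localreg`). -/
theorem open_loop_vs_autarky
    (f αi αj : ℝ → ℝ)
    (ci cj kb kai kaj : ℝ)
    -- f is a neoclassical production function
    (hcont : ContinuousOn f (Set.Ici 0))
    (hmono : StrictMonoOn f (Set.Ici 0))
    (hconc : StrictConcaveOn ℝ (Set.Ici 0) f)
    (hdiff : DifferentiableOn ℝ f (Set.Ioi 0))
    (hf0 : f 0 = 0)
    -- twice differentiable on (0,∞) with f' strictly decreasing
    (hdiff2 : DifferentiableOn ℝ (deriv f) (Set.Ioi 0))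
    (hderanti : StrictAntiOn (deriv f) (Set.Ioi 0))
    -- discount factors: continuous, strictly increasing, with values in (0,1), αi ≥ αj
    (hαic : ContinuousOn αi (Set.Ici 0))
    (hαim : StrictMonoOn αi (Set.Ici 0))
    (hαiv : ∀ c ∈ Set.Ici (0:ℝ), αi c ∈ Set.Ioo (0:ℝ) 1)
    (hαjc : ContinuousOn αj (Set.Ici 0))
    (hαjm : StrictMonoOn αj (Set.Ici 0))
    (hαjv : ∀ c ∈ Set.Ici (0:ℝ), αj c ∈ Set.Ioo (0:ℝ) 1)
    (hge : ∀ c ∈ Set.Ici (0:ℝ), αj c ≤ αi c)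
    -- stationary open-loop equilibrium
    (hci : 0 < ci) (hcj : 0 < cj) (hkb : 0 < kb)
    (heqi : αi ci * deriv f kb = 1)
    (heqj : αj cj * deriv f kb = 1)
    (hres : kb = f kb - ci - cj)
    -- autarky stationary equilibria
    (hkai : 0 < kai) (hkaj : 0 < kaj)
    (hcai : 0 < f kai - kai) (hcaj : 0 < f kaj - kaj)
    (hauti : αi (f kai - kai) * deriv f kai = 1)
    (hautj : αj (f kaj - kaj) * deriv f kaj = 1)
    -- local regularity: the stationary-equilibrium maps are strictly decreasing
    -- on an interval containing kb, kai, kaj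
    (hLR : ∃ lo hi : ℝ,
      kb ∈ Set.Icc lo hi ∧ kai ∈ Set.Icc lo hi ∧ kaj ∈ Set.Icc lo hi ∧
      StrictAntiOn (fun k => αi (f k - k) * deriv f k) (Set.Icc lo hi) ∧
      StrictAntiOn (fun k => αj (f k - k) * deriv f k) (Set.Icc lo hi)) :
    ci ≤ cj ∧ (kb ≤ kaj ∧ kaj ≤ kai) ∧ (ci ≤ f kai - kai ∧ cj ≤ f kaj - kaj) := by

  obtain ⟨lo, hi, hkbm, hkaim, hkajm, hgi, hgj⟩ := hLR
  have hαici := hαiv ci hci.le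
  have hαjcj := hαjv cj hcj.le
  have hαicai := hαiv (f kai - kai) hcai.le
  have hαjcaj := hαjv (f kaj - kaj) hcaj.le
  have hfkb : 0 < deriv f kb := by nlinarith [hαici.1, hαici.2]
  have hfkai : 0 < deriv f kai := by nlinarith [hαicai.1, hαicai.2]
  have hfkaj : 0 < deriv f kaj := by nlinarith [hαjcaj.1, hαjcaj.2]
  have heqij : αi ci = αj cj := by
    have h0 : (αi ci - αj cj) * deriv f kb = 0 := by nlinarith
    rcases mul_eq_zero.mp h0 with h | h
    · linarith
    · linarith
  have hcij : ci ≤ cj := by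
    have h1 : αi ci ≤ αi cj := by
      have := hge cj hcj.le; linarith
    exact (hαim.le_iff_le hci.le hcj.le).mp h1
  have hsum : f kb - kb = ci + cj := by linarith
  have hkbkaj : kb < kaj := by
    have hlt : (fun k => αj (f k - k) * deriv f k) kaj
        < (fun k => αj (f k - k) * deriv f k) kb := by
      simp only
      rw [hautj, hsum]
      have h1 : αj cj < αj (ci + cj) :=
        hαjm hcj.le (by simp; linarith) (by linarith)
      nlinarith
    exact (hgj.lt_iff_gt hkajm hkbm).mp hlt
  have hkajkai : kaj ≤ kai := by
    have hle : (fun k => αi (f k - k) * deriv f k) kai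
        ≤ (fun k => αi (f k - k) * deriv f k) kaj := by
      simp only
      rw [hauti]
      have h1 := hge (f kaj - kaj) hcaj.le
      nlinarith
    exact (hgi.le_iff_ge hkaim hkajm).mp hle
  have hkbkai : kb < kai := lt_of_lt_of_le hkbkaj hkajkai
  have hfd1 : deriv f kai < deriv f kb :=
    hderanti (Set.mem_Ioi.mpr hkb) (Set.mem_Ioi.mpr hkai) hkbkai
  have hfd2 : deriv f kaj < deriv f kb :=
    hderanti (Set.mem_Ioi.mpr hkb) (Set.mem_Ioi.mpr hkaj) hkbkaj
  have hci2 : ci ≤ f kai - kai := by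
    have h1 : αi ci < αi (f kai - kai) := by nlinarith [hαici.1]
    exact le_of_lt ((hαim.lt_iff_lt hci.le hcai.le).mp h1)
  have hcj2 : cj ≤ f kaj - kaj := by
    have h1 : αj cj < αj (f kaj - kaj) := by nlinarith [hαjcj.1]
    exact le_of_lt ((hαjm.lt_iff_lt hcj.le hcaj.le).mp h1)
  exact ⟨hcij, ⟨hkbkaj.le, hkajkai⟩, hci2, hcj2⟩
end

section
/- Let ω_i > δ_i > 0, ω_j > δ_j > 0, η_i < 0, η_j < 0 and f' > 1 be real numbers, and set Δ₀ = ω_i·ω_j − δ_i·δ_j. Define the cubic p(λ) = λ³ − T·λ² + S·λ − D, where T = [2·ω_i·ω_j − η_i·(ω_j − δ_j) − η_j·(ω_i − δ_i)]/Δ₀ + f', S = [ω_i·ω_j − η_i·ω_j − ω_i·η_j + 2·ω_i·ω_j·f']/Δ₀, and D = ω_i·ω_j·f'/Δ₀. Then Δ₀ > 0, T > 0, S > 0, D > 0, and p(−1) < p(0) < 0 < p(1). -/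
/-- Signs of the coefficients and key values of the characteristic
polynomial of the linearized open-loop dynamics (Lemma `Ps`). -/
theorem characteristic_polynomial_values
    (ωi ωj δi δj ηi ηj f' Δ₀ T S D : ℝ) (p : ℝ → ℝ)
    (hδi : 0 < δi) (hωi : δi < ωi)
    (hδj : 0 < δj) (hωj : δj < ωj)
    (hηi : ηi < 0) (hηj : ηj < 0) (hf' : 1 < f')
    (hΔ₀ : Δ₀ = ωi * ωj - δi * δj)
    (hT : T = (2 * ωi * ωj - ηi * (ωj - δj) - ηj * (ωi - δi)) / Δ₀ + f')
    (hS : S = (ωi * ωj - ηi * ωj - ωi * ηj + 2 * ωi * ωj * f') / Δ₀)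
    (hD : D = ωi * ωj * f' / Δ₀)
    (hp : ∀ x : ℝ, p x = x ^ 3 - T * x ^ 2 + S * x - D) :
    0 < Δ₀ ∧ 0 < T ∧ 0 < S ∧ 0 < D ∧
      p (-1) < p 0 ∧ p 0 < 0 ∧ 0 < p 1 := by
  have hΔpos : 0 < Δ₀ := by
    rw [hΔ₀]
    nlinarith [mul_pos hδi hδj]
  have hTpos : 0 < T := by
    rw [hT]
    have h1 : 0 < (2 * ωi * ωj - ηi * (ωj - δj) - ηj * (ωi - δi)) / Δ₀ := by
      apply div_pos _ hΔpos
      nlinarith [mul_pos hδi hδj, mul_neg_of_neg_of_pos hηi (by linarith : (0:ℝ) < ωj - δj),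
        mul_neg_of_neg_of_pos hηj (by linarith : (0:ℝ) < ωi - δi)]
    linarith
  have hSpos : 0 < S := by
    rw [hS]
    apply div_pos _ hΔpos
    nlinarith [mul_pos (lt_trans hδi hωi) (lt_trans hδj hωj),
      mul_neg_of_neg_of_pos hηi (lt_trans hδj hωj),
      mul_neg_of_pos_of_neg (lt_trans hδi hωi) hηj]
  have hDpos : 0 < D := by
    rw [hD]
    apply div_pos _ hΔpos
    nlinarith [mul_pos (lt_trans hδi hωi) (lt_trans hδj hωj)]
  refine ⟨hΔpos, hTpos, hSpos, hDpos, ?_, ?_, ?_⟩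
  · rw [hp (-1), hp 0]; nlinarith
  · rw [hp 0]; nlinarith
  · rw [hp 1]
    have key : 1 - T * 1 ^ 2 + S * 1 - D
        = (δi * δj * (f' - 1) - ηi * δj - ηj * δi) / Δ₀ := by
      have hne : ωi * ωj - δi * δj ≠ 0 := by rw [hΔ₀] at hΔpos; linarith
      rw [hT, hS, hD]
      field_simp [hΔpos.ne']
      rw [hΔ₀]
      ring
    have : (1:ℝ) ^ 3 - T * 1 ^ 2 + S * 1 - D
        = (δi * δj * (f' - 1) - ηi * δj - ηj * δi) / Δ₀ := by
      rw [← key]; ring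
    rw [this]
    apply div_pos _ hΔpos
    nlinarith [mul_pos hδi hδj, mul_neg_of_neg_of_pos hηi hδj,
      mul_neg_of_neg_of_pos hηj hδi]
end

section
/- Let ω_i > δ_i > 0, ω_j > δ_j > 0, η_i < 0, η_j < 0 and f' > 1 be real numbers, set Δ₀ = ω_i·ω_j − δ_i·δ_j, and let T = [2·ω_i·ω_j − η_i·(ω_j − δ_j) − η_j·(ω_i − δ_i)]/Δ₀ + f' be the trace of the Jacobian of the linearized open-loop equilibrium dynamics. Then T/3 > 1. -/
/-- The trace of the Jacobian of the linearized open-loop dynamics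
exceeds 3 (Lemma `trAb3`). -/
theorem trace_over_three_gt_one
    (ωi ωj δi δj ηi ηj f' Δ₀ T : ℝ)
    (hδi : 0 < δi) (hωi : δi < ωi)
    (hδj : 0 < δj) (hωj : δj < ωj)
    (hηi : ηi < 0) (hηj : ηj < 0) (hf' : 1 < f')
    (hΔ₀ : Δ₀ = ωi * ωj - δi * δj)
    (hT : T = (2 * ωi * ωj - ηi * (ωj - δj) - ηj * (ωi - δi)) / Δ₀ + f') :
    1 < T / 3 := by
  have hΔpos : 0 < Δ₀ := by nlinarith
  have hfrac : 2 < (2 * ωi * ωj - ηi * (ωj - δj) - ηj * (ωi - δi)) / Δ₀ := by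
    rw [lt_div_iff₀ hΔpos]
    nlinarith
  linarith
end

section
/- Let ω_i > δ_i > 0, ω_j > δ_j > 0, η_i < 0, η_j < 0 and f' > 1 be real numbers, set Δ₀ = ω_i·ω_j − δ_i·δ_j, and define the cubic p(λ) = λ³ − T·λ² + S·λ − D with T = [2·ω_i·ω_j − η_i·(ω_j − δ_j) − η_j·(ω_i − δ_i)]/Δ₀ + f', S = [ω_i·ω_j − η_i·ω_j − ω_i·η_j + 2·ω_i·ω_j·f']/Δ₀ and D = ω_i·ω_j·f'/Δ₀. If p has three real roots λ₁ ≤ λ₂ ≤ λ₃ (i.e. p(λ) = (λ − λ₁)(λ − λ₂)(λ − λ₃)), then 0 < λ₁ < 1 < λ₂ ≤ λ₃. -/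
/-- If the characteristic polynomial of the linearized open-loop
dynamics has three real roots `λ₁ ≤ λ₂ ≤ λ₃`, then `0 < λ₁ < 1 < λ₂ ≤ λ₃`
(eigenvalue configuration of Theorem `manifoldOL`). -/
theorem eigenvalue_configuration
    (ωi ωj δi δj ηi ηj f' Δ₀ T S D : ℝ) (p : ℝ → ℝ) (lam₁ lam₂ lam₃ : ℝ)
    (hδi : 0 < δi) (hωi : δi < ωi)
    (hδj : 0 < δj) (hωj : δj < ωj)
    (hηi : ηi < 0) (hηj : ηj < 0) (hf' : 1 < f')
    (hΔ₀ : Δ₀ = ωi * ωj - δi * δj)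
    (hT : T = (2 * ωi * ωj - ηi * (ωj - δj) - ηj * (ωi - δi)) / Δ₀ + f')
    (hS : S = (ωi * ωj - ηi * ωj - ωi * ηj + 2 * ωi * ωj * f') / Δ₀)
    (hD : D = ωi * ωj * f' / Δ₀)
    (hp : ∀ x : ℝ, p x = x ^ 3 - T * x ^ 2 + S * x - D)
    (h12 : lam₁ ≤ lam₂) (h23 : lam₂ ≤ lam₃)
    (hfact : ∀ x : ℝ, p x = (x - lam₁) * (x - lam₂) * (x - lam₃)) :
    0 < lam₁ ∧ lam₁ < 1 ∧ 1 < lam₂ ∧ lam₂ ≤ lam₃ := by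
  have hwi : (0:ℝ) < ωi := lt_trans hδi hωi
  have hwj : (0:ℝ) < ωj := lt_trans hδj hωj
  have hΔpos : 0 < Δ₀ := by rw [hΔ₀]; nlinarith
  have hDgt : 1 < D := by
    rw [hD, lt_div_iff₀ hΔpos, hΔ₀]
    nlinarith [mul_pos hwi hwj, mul_pos hδi hδj,
      mul_pos (mul_pos hwi hwj) (by linarith : (0:ℝ) < f' - 1)]
  have hTpos : 0 < T := by
    rw [hT]
    have : 0 < (2 * ωi * ωj - ηi * (ωj - δj) - ηj * (ωi - δi)) / Δ₀ := by
      apply div_pos _ hΔpos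
      nlinarith [mul_pos hwi hwj, mul_pos (neg_pos.mpr hηi) (by linarith : (0:ℝ) < ωj - δj),
        mul_pos (neg_pos.mpr hηj) (by linarith : (0:ℝ) < ωi - δi)]
    linarith
  have hSpos : 0 < S := by
    rw [hS]
    apply div_pos _ hΔpos
    nlinarith [mul_pos hwi hwj, mul_pos (neg_pos.mpr hηi) hwj,
      mul_pos hwi (neg_pos.mpr hηj), mul_pos (mul_pos hwi hwj) (by linarith : (0:ℝ) < f')]
  have hp1 : (0:ℝ) < p 1 := by
    have h1 : p 1 = ((f' - 1) * (δi * δj) - (ηi * δj + ηj * δi)) / Δ₀ := by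
      rw [hp, hT, hS, hD]
      field_simp
      rw [hΔ₀]; ring
    rw [h1]
    apply div_pos _ hΔpos
    nlinarith [mul_pos (by linarith : (0:ℝ) < f' - 1) (mul_pos hδi hδj),
      mul_pos (neg_pos.mpr hηi) hδj, mul_pos (neg_pos.mpr hηj) hδi]
  have h0 := (hp 0).symm.trans (hfact 0)
  have hprod : lam₁ * lam₂ * lam₃ = D := by linear_combination h0
  have hfac1 : (1 - lam₁) * (1 - lam₂) * (1 - lam₃) = p 1 := (hfact 1).symm
  -- all roots are positive
  have hpos : ∀ l : ℝ, p l = 0 → 0 < l := by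
    intro l hl
    by_contra h
    push_neg at h
    have hpl := hp l
    rw [hl] at hpl
    nlinarith [sq_nonneg l, mul_nonpos_of_nonneg_of_nonpos (le_of_lt hSpos) h,
      mul_nonneg (le_of_lt hTpos) (sq_nonneg l),
      mul_nonpos_of_nonneg_of_nonpos (sq_nonneg l) h]
  have hl1 : 0 < lam₁ := hpos lam₁ (by rw [hfact]; ring)
  have hl2 : 0 < lam₂ := hpos lam₂ (by rw [hfact]; ring)
  have hl3 : 0 < lam₃ := hpos lam₃ (by rw [hfact]; ring)
  -- λ₃ > 1
  have h3 : 1 < lam₃ := by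
    by_contra h
    push_neg at h
    have h1' : lam₁ ≤ 1 := le_trans h12 (le_trans h23 h)
    have h2' : lam₂ ≤ 1 := le_trans h23 h
    have ha : lam₁ * lam₂ ≤ 1 := mul_le_one₀ h1' hl2.le h2'
    have hb : lam₁ * lam₂ * lam₃ ≤ 1 := mul_le_one₀ ha hl3.le h
    linarith [hprod ▸ hb]
  -- (1-λ₁)(1-λ₂) < 0
  have hk : (1 - lam₁) * (1 - lam₂) < 0 := by
    by_contra h
    push_neg at h
    have hle : (1 - lam₁) * (1 - lam₂) * (1 - lam₃) ≤ 0 :=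
      mul_nonpos_of_nonneg_of_nonpos h (by linarith)
    linarith [hfac1 ▸ hle]
  have hl2gt : 1 < lam₂ := by
    by_contra h
    push_neg at h
    have h1' : lam₁ ≤ 1 := le_trans h12 h
    exact absurd (mul_nonneg (by linarith : (0:ℝ) ≤ 1 - lam₁)
      (by linarith : (0:ℝ) ≤ 1 - lam₂)) (not_le.mpr hk)
  have hl1lt : lam₁ < 1 := by
    by_contra h
    push_neg at h
    have h2' : (1:ℝ) ≤ lam₂ := le_trans h h12
    exact absurd (mul_nonneg_of_nonpos_of_nonpos (by linarith : 1 - lam₁ ≤ 0)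
      (by linarith : 1 - lam₂ ≤ 0)) (not_le.mpr hk)
  exact ⟨hl1, hl1lt, hl2gt, h23⟩
end

section
/- Let λ₁*, λ₂* be real numbers with −1 < λ₁* < 0 < λ₂* and λ₁* + λ₂* > 0, and set H₁* = λ₁*·λ₂*/(λ₁* + λ₂*) and H₂* = 1/(λ₁* + λ₂*) (so H₁* < 0 < H₂*). Set λ̲ = max{−1, −√(|λ₁*·λ₂*|)}. Then −1 ≤ λ̲ < λ₁*, and for every λ ∈ (λ̲, λ₁*) there exist constants m₁, m₂ with H₁* < m₁ < 0 and 0 < H₂* < m₂ satisfying λ < H₁* + H₂*·λ² < m₁ + m₂·λ² < 0. -/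
/-- Lemma `m1m2def`: existence of the bounding constants `m₁, m₂`
for every `λ ∈ (λ̲, λ₁*)` where `λ̲ = max {−1, −√|λ₁*·λ₂*|}`. -/
theorem m1_m2_existence
    (lam₁ lam₂ H₁ H₂ lb : ℝ)
    (h₁ : -1 < lam₁) (h₂ : lam₁ < 0) (h₃ : 0 < lam₂)
    (hsum : 0 < lam₁ + lam₂)
    (hH₁ : H₁ = lam₁ * lam₂ / (lam₁ + lam₂))
    (hH₂ : H₂ = 1 / (lam₁ + lam₂))
    (hlb : lb = max (-1) (-Real.sqrt |lam₁ * lam₂|)) :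
    (H₁ < 0 ∧ 0 < H₂) ∧
    (-1 ≤ lb ∧ lb < lam₁) ∧
    (∀ lam ∈ Set.Ioo lb lam₁, ∃ m₁ m₂ : ℝ,
      (H₁ < m₁ ∧ m₁ < 0) ∧ (0 < H₂ ∧ H₂ < m₂) ∧
      lam < H₁ + H₂ * lam ^ 2 ∧
      H₁ + H₂ * lam ^ 2 < m₁ + m₂ * lam ^ 2 ∧
      m₁ + m₂ * lam ^ 2 < 0) := by
  have hprod : lam₁ * lam₂ < 0 := mul_neg_of_neg_of_pos h₂ h₃
  have habs : |lam₁ * lam₂| = -(lam₁ * lam₂) := abs_of_neg hprod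
  have hH₁neg : H₁ < 0 := by
    rw [hH₁]; exact div_neg_of_neg_of_pos hprod hsum
  have hH₂pos : 0 < H₂ := by rw [hH₂]; positivity
  have hsqrt : -Real.sqrt |lam₁ * lam₂| < lam₁ := by
    rw [habs, neg_lt, Real.lt_sqrt (by linarith : (0:ℝ) ≤ -lam₁)]
    nlinarith
  have hlb1 : -1 ≤ lb := by rw [hlb]; exact le_max_left _ _
  have hlb2 : lb < lam₁ := by rw [hlb]; exact max_lt h₁ hsqrt
  refine ⟨⟨hH₁neg, hH₂pos⟩, ⟨hlb1, hlb2⟩, ?_⟩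
  rintro lam ⟨hl1, hl2⟩
  have hlamneg : lam < 0 := lt_trans hl2 h₂
  have hsqrtlam : -Real.sqrt |lam₁ * lam₂| < lam :=
    lt_of_le_of_lt (by rw [hlb]; exact le_max_right _ _) hl1
  have hsq : lam ^ 2 < -(lam₁ * lam₂) := by
    have h1 : lam < Real.sqrt |lam₁ * lam₂| :=
      lt_of_lt_of_le hlamneg (Real.sqrt_nonneg _)
    have := sq_lt_sq' hsqrtlam h1
    rwa [Real.sq_sqrt (abs_nonneg _), habs] at this
  have hCform : H₁ + H₂ * lam ^ 2 = (lam₁ * lam₂ + lam ^ 2) / (lam₁ + lam₂) := by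
    rw [hH₁, hH₂]; field_simp
  have hC : H₁ + H₂ * lam ^ 2 < 0 := by
    rw [hCform]; apply div_neg_of_neg_of_pos (by linarith) hsum
  have hlamC : lam < H₁ + H₂ * lam ^ 2 := by
    rw [hCform, lt_div_iff₀ hsum]
    nlinarith [mul_pos (show 0 < lam₁ - lam by linarith) (show 0 < lam₂ - lam by linarith)]
  set C := H₁ + H₂ * lam ^ 2 with hCdef
  set δ := -C / (2 * (1 + lam ^ 2)) with hδdef
  have hden : 0 < 1 + lam ^ 2 := by positivity
  have hδpos : 0 < δ := div_pos (by linarith) (by positivity)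
  have hδmul : δ * (1 + lam ^ 2) = -C / 2 := by
    rw [hδdef]; field_simp
  refine ⟨H₁ + δ, H₂ + δ, ⟨by linarith, ?_⟩, ⟨hH₂pos, by linarith⟩, hlamC, ?_, ?_⟩
  · nlinarith [mul_nonneg hH₂pos.le (sq_nonneg lam), mul_nonneg hδpos.le (sq_nonneg lam)]
  · nlinarith [mul_nonneg hδpos.le (sq_nonneg lam)]
  · nlinarith
end

section
/- Let ε > 0, k* ∈ ℝ, I = [k* − ε, k* + ε], and λ ∈ (−1, 0). Let a₁, m₁, m₂ be constants with λ ≤ a₁ ≤ m₁ < 0 < m₂ and m₁ + m₂·λ² < 0. Let H : I × I → ℝ be continuous with H(k*, k*) = k*, and suppose: for all z ∈ I and all x, x' ∈ I with x ≥ x', a₁·(x − x') ≤ H(x, z) − H(x', z) ≤ m₁·(x − x'); and for all x ∈ I and all z, z' ∈ I with z ≥ z', 0 ≤ H(x, z) − H(x, z') ≤ m₂·(z − z'). Then for every h in the space D̂_{|λ|}(I) of continuous, monotone decreasing functions h : I → ℝ with h(k*) = k* and |h(k) − h(k')| ≤ |λ|·|k − k'| for all k, k' ∈ I, the function Th defined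 by (Th)(k) = H(k, h(h(k))) is well defined (h maps I into I) and again belongs to D̂_{|λ|}(I). -/
/-- The space `D̂_{|λ|}(I)` of continuous, monotone decreasing functions on `I`
fixing `k*` and Lipschitz with constant `|λ|`. -/
def Dhat (I : Set ℝ) (kstar lam : ℝ) : Set (ℝ → ℝ) :=
  {h | ContinuousOn h I ∧ AntitoneOn h I ∧ h kstar = kstar ∧
    ∀ k ∈ I, ∀ k' ∈ I, |h k - h k'| ≤ |lam| * |k - k'|}

/-- The operator `T h = H (·, h (h ·))` maps `D̂_{|λ|}(I)` into
itself. -/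
theorem T_maps_Dhat_to_itself
    (ε kstar lam a₁ m₁ m₂ : ℝ) (I : Set ℝ) (H : ℝ → ℝ → ℝ)
    (hε : 0 < ε) (hI : I = Set.Icc (kstar - ε) (kstar + ε))
    (hlam : lam ∈ Set.Ioo (-1 : ℝ) 0)
    (h₁ : lam ≤ a₁) (h₂ : a₁ ≤ m₁) (h₃ : m₁ < 0) (h₄ : 0 < m₂)
    (h₅ : m₁ + m₂ * lam ^ 2 < 0)
    (hHc : ContinuousOn (fun q : ℝ × ℝ => H q.1 q.2) (I ×ˢ I))
    (hHfix : H kstar kstar = kstar)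
    (hHx : ∀ z ∈ I, ∀ x ∈ I, ∀ x' ∈ I, x' ≤ x →
      a₁ * (x - x') ≤ H x z - H x' z ∧ H x z - H x' z ≤ m₁ * (x - x'))
    (hHz : ∀ x ∈ I, ∀ z ∈ I, ∀ z' ∈ I, z' ≤ z →
      0 ≤ H x z - H x z' ∧ H x z - H x z' ≤ m₂ * (z - z')) :
    ∀ h ∈ Dhat I kstar lam,
      (∀ k ∈ I, h k ∈ I) ∧ (fun k => H k (h (h k))) ∈ Dhat I kstar lam := by
  intro h hh
  obtain ⟨hc, ha, hfix, hlip⟩ := hh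
  have hlamneg : lam < 0 := hlam.2
  have hlamabs : |lam| = -lam := abs_of_neg hlamneg
  have hlamle1 : |lam| ≤ 1 := by rw [hlamabs]; linarith [hlam.1]
  have hkstar : kstar ∈ I := by
    rw [hI, Set.mem_Icc]; constructor <;> linarith
  have hmem : ∀ k ∈ I, h k ∈ I := by
    intro k hk
    have h1 : |h k - kstar| ≤ |lam| * |k - kstar| := by
      have := hlip k hk kstar hkstar; rwa [hfix] at this
    have h2 : |k - kstar| ≤ ε := by
      rw [hI, Set.mem_Icc] at hk; rw [abs_le]; constructor <;> linarith
    have h3 : |h k - kstar| ≤ ε := by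
      calc |h k - kstar| ≤ |lam| * |k - kstar| := h1
        _ ≤ 1 * ε := mul_le_mul hlamle1 h2 (abs_nonneg _) zero_le_one
        _ = ε := one_mul ε
    rw [abs_le] at h3
    rw [hI, Set.mem_Icc]
    constructor <;> linarith [h3.1, h3.2]
  have key : ∀ k ∈ I, ∀ k' ∈ I, k' ≤ k →
      lam * (k - k') ≤ H k (h (h k)) - H k' (h (h k')) ∧
      H k (h (h k)) - H k' (h (h k')) ≤ (m₁ + m₂ * lam ^ 2) * (k - k') := by
    intro k hk k' hk' hle
    have hhk := hmem _ (hmem k hk)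
    have hhk' := hmem _ (hmem k' hk')
    have hz : h (h k') ≤ h (h k) := ha (hmem k hk) (hmem k' hk') (ha hk' hk hle)
    have hzd : h (h k) - h (h k') ≤ lam ^ 2 * (k - k') := by
      have l1 : |h (h k) - h (h k')| ≤ |lam| * |h k - h k'| :=
        hlip _ (hmem k hk) _ (hmem k' hk')
      have l2 : |h k - h k'| ≤ |lam| * |k - k'| := hlip k hk k' hk'
      have l3 : |h (h k) - h (h k')| ≤ |lam| * (|lam| * |k - k'|) :=
        l1.trans (mul_le_mul_of_nonneg_left l2 (abs_nonneg _))
      rw [abs_of_nonneg (by linarith : (0:ℝ) ≤ h (h k) - h (h k')),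
        abs_of_nonneg (by linarith : (0:ℝ) ≤ k - k')] at l3
      calc h (h k) - h (h k') ≤ |lam| * (|lam| * (k - k')) := l3
        _ = lam ^ 2 * (k - k') := by rw [hlamabs]; ring
    obtain ⟨hx1, hx2⟩ := hHx (h (h k)) hhk k hk k' hk' hle
    obtain ⟨hz1, hz2⟩ := hHz k' hk' (h (h k)) hhk (h (h k')) hhk' hz
    constructor
    · nlinarith [mul_nonneg (by linarith : (0:ℝ) ≤ a₁ - lam)
        (by linarith : (0:ℝ) ≤ k - k')]
    · nlinarith [mul_le_mul_of_nonneg_left hzd h₄.le]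
  refine ⟨hmem, ?_, ?_, ?_, ?_⟩
  · -- continuity
    have hhc : ContinuousOn (fun k => h (h k)) I := hc.comp hc hmem
    have hpc : ContinuousOn (fun k => ((k, h (h k)) : ℝ × ℝ)) I :=
      continuousOn_id.prodMk hhc
    exact hHc.comp hpc (fun k hk => Set.mk_mem_prod hk (hmem _ (hmem k hk)))
  · -- antitone
    intro k hk k' hk' hle
    have := (key k' hk' k hk hle).2
    simp only
    nlinarith [mul_nonneg (by linarith : (0:ℝ) ≤ -(m₁ + m₂ * lam ^ 2))
      (by linarith : (0:ℝ) ≤ k' - k)]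
  · -- fixed point
    simp only [hfix, hHfix]
  · -- Lipschitz
    intro k hk k' hk'
    simp only
    rcases le_total k' k with hle | hle
    · obtain ⟨kl, ku⟩ := key k hk k' hk' hle
      rw [abs_le, hlamabs, abs_of_nonneg (by linarith : (0:ℝ) ≤ k - k')]
      constructor
      · linarith
      · nlinarith [mul_nonneg (by linarith : (0:ℝ) ≤ -(m₁ + m₂ * lam ^ 2))
          (by linarith : (0:ℝ) ≤ k - k'),
          mul_nonneg (by linarith : (0:ℝ) ≤ -lam) (by linarith : (0:ℝ) ≤ k - k')]
    · obtain ⟨kl, ku⟩ := key k' hk' k hk hle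
      rw [abs_le, hlamabs, abs_of_nonpos (by linarith : k - k' ≤ 0)]
      constructor
      · nlinarith [mul_nonneg (by linarith : (0:ℝ) ≤ -(m₁ + m₂ * lam ^ 2))
          (by linarith : (0:ℝ) ≤ k' - k),
          mul_nonneg (by linarith : (0:ℝ) ≤ -lam) (by linarith : (0:ℝ) ≤ k' - k)]
      · linarith
end

section
/- Let ε > 0, k* ∈ ℝ, I = [k* − ε, k* + ε], and λ ∈ (−1, 0). Let a₁, m₁, m₂ be constants with λ ≤ a₁ ≤ m₁ < 0 < m₂ and m₁ + m₂·λ² < 0. Let H : I × I → ℝ be continuous with H(k*, k*) = k*, such that for all z ∈ I and x ≥ x' in I, a₁·(x − x') ≤ H(x, z) − H(x', z) ≤ m₁·(x − x'), and for all x ∈ I and z ≥ z' in I, 0 ≤ H(x, z) − H(x, z') ≤ m₂·(z − z'). Then the operator T defined on D̂_{|λ|}(I) by (Th)(k) = H(k, h(h(k))) has a fixed point: there exists h* ∈ D̂_{|λ|}(I) with H(k, h*(h*(k))) = h*(k) for all k ∈ I. -/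
namespace T17aux

open Set Filter Topology

/-- Bundle of all hypotheses of the main theorem. -/
structure Setup (ε kstar lam a₁ m₁ m₂ : ℝ) (I : Set ℝ) (H : ℝ → ℝ → ℝ) : Prop where
  hε : 0 < ε
  hI : I = Set.Icc (kstar - ε) (kstar + ε)
  hlam₁ : -1 < lam
  hlam₂ : lam < 0
  h₁ : lam ≤ a₁
  h₂ : a₁ ≤ m₁
  h₃ : m₁ < 0
  h₄ : 0 < m₂
  h₅ : m₁ + m₂ * lam ^ 2 < 0
  hHc : ContinuousOn (fun q : ℝ × ℝ => H q.1 q.2) (I ×ˢ I)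
  hHfix : H kstar kstar = kstar
  hHx : ∀ z ∈ I, ∀ x ∈ I, ∀ x' ∈ I, x' ≤ x →
      a₁ * (x - x') ≤ H x z - H x' z ∧ H x z - H x' z ≤ m₁ * (x - x')
  hHz : ∀ x ∈ I, ∀ z ∈ I, ∀ z' ∈ I, z' ≤ z →
      0 ≤ H x z - H x z' ∧ H x z - H x z' ≤ m₂ * (z - z')

variable {ε kstar lam a₁ m₁ m₂ : ℝ} {I : Set ℝ} {H : ℝ → ℝ → ℝ}

namespace Setup

variable (S : Setup ε kstar lam a₁ m₁ m₂ I H)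
include S

lemma absl_pos : 0 < |lam| := abs_pos.2 (ne_of_lt S.hlam₂)

lemma absl_lt_one : |lam| < 1 := abs_lt.2 ⟨S.hlam₁, lt_trans S.hlam₂ one_pos⟩

lemma absl_eq : |lam| = -lam := abs_of_neg S.hlam₂

lemma mem_iff {k : ℝ} : k ∈ I ↔ |k - kstar| ≤ ε := by
  rw [S.hI, Set.mem_Icc, abs_sub_le_iff]
  constructor <;> rintro ⟨p, q⟩ <;> constructor <;> linarith

lemma kstar_mem : kstar ∈ I := by
  rw [S.mem_iff]; simp [le_of_lt S.hε]

lemma close_mem {k y : ℝ} (hk : k ∈ I) (hy : |y - kstar| ≤ |lam| * |k - kstar|) :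
    y ∈ I := by
  rw [S.mem_iff] at hk ⊢
  calc |y - kstar| ≤ |lam| * |k - kstar| := hy
    _ ≤ 1 * ε := by
        apply mul_le_mul (le_of_lt S.absl_lt_one) hk (abs_nonneg _) zero_le_one
    _ = ε := one_mul ε

lemma dhat_close {h : ℝ → ℝ} (hh : h ∈ Dhat I kstar lam) {k : ℝ} (hk : k ∈ I) :
    |h k - kstar| ≤ |lam| * |k - kstar| := by
  have := hh.2.2.2 k hk kstar S.kstar_mem
  rwa [hh.2.2.1] at this

lemma dhat_maps {h : ℝ → ℝ} (hh : h ∈ Dhat I kstar lam) {k : ℝ} (hk : k ∈ I) :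
    h k ∈ I := S.close_mem hk (S.dhat_close hh hk)

/-- Uniqueness of the root of `y = H k (h y)` for antitone `h`. -/
lemma root_unique' {h : ℝ → ℝ} (hh : h ∈ Dhat I kstar lam) {k : ℝ} (hk : k ∈ I)
    {y y' : ℝ} (hy : y ∈ I) (hy' : y' ∈ I)
    (e : H k (h y) = y) (e' : H k (h y') = y') : y = y' := by
  have key : ∀ u v : ℝ, u ∈ I → v ∈ I → H k (h u) = u → H k (h v) = v → u ≤ v → u = v := by
    intro u v hu hv eu ev huv
    have hmono : h v ≤ h u := hh.2.1 hu hv huv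
    have := (S.hHz k hk (h u) (S.dhat_maps hh hu) (h v) (S.dhat_maps hh hv) hmono).1
    -- 0 ≤ H k (h u) - H k (h v) = u - v
    have : v ≤ u := by rw [eu, ev] at this; linarith
    linarith
  rcases le_total y y' with hle | hle
  · exact key y y' hy hy' e e' hle
  · exact (key y' y hy' hy e' e hle).symm

/-- Existence of the root, with the location estimate. -/
lemma exists_root {h : ℝ → ℝ} (hh : h ∈ Dhat I kstar lam) {k : ℝ} (hk : k ∈ I) :
    ∃ y, y ∈ I ∧ |y - kstar| ≤ |lam| * |k - kstar| ∧ H k (h y) = y := by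
  have hIco : ContinuousOn (fun y => H k (h y)) I := by
    have maps : Set.MapsTo (fun y => (k, h y)) I (I ×ˢ I) := by
      intro y hy; exact ⟨hk, S.dhat_maps hh hy⟩
    exact S.hHc.comp (continuousOn_const.prodMk hh.1) maps
  have hkst := S.kstar_mem
  rcases le_total kstar k with hkk | hkk
  · -- k ≥ kstar, root in [kstar + lam*(k-kstar), kstar]
    set a : ℝ := kstar + lam * (k - kstar) with ha_def
    have hts : 0 ≤ k - kstar := by linarith
    have hale : a ≤ kstar := by nlinarith [S.hlam₂]
    have haI : a ∈ I := by
      rw [S.mem_iff]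
      rw [S.mem_iff] at hk
      have : |a - kstar| = -lam * (k - kstar) := by
        rw [ha_def]; rw [abs_of_nonpos (by nlinarith [S.hlam₂])]; ring
      rw [this]
      calc -lam * (k - kstar) ≤ 1 * ε := by
            apply mul_le_mul _ _ hts zero_le_one
            · linarith [S.hlam₁]
            · calc k - kstar ≤ |k - kstar| := le_abs_self _
                _ ≤ ε := hk
        _ = ε := one_mul ε
    have hsub : Set.Icc a kstar ⊆ I := by
      rw [S.hI]; apply Set.Icc_subset_Icc
      · rw [S.hI] at haI; exact haI.1
      · linarith [S.hε]
    -- g y = H k (h y) - y ; g kstar ≤ 0 ≤ g a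
    have gk : H k (h kstar) - kstar ≤ 0 := by
      rw [hh.2.2.1]
      have := (S.hHx kstar hkst k hk kstar hkst hkk).2
      rw [S.hHfix] at this
      nlinarith [S.h₃]
    have ga : a ≤ H k (h a) := by
      have h1 : kstar ≤ h a := by
        have := hh.2.1 haI hkst hale
        rwa [hh.2.2.1] at this
      have h2 : 0 ≤ H k (h a) - H k kstar :=
        (S.hHz k hk (h a) (S.dhat_maps hh haI) kstar hkst h1).1
      have h3 : a₁ * (k - kstar) ≤ H k kstar - kstar := by
        have := (S.hHx kstar hkst k hk kstar hkst hkk).1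
        rw [S.hHfix] at this; linarith
      have h4 : lam * (k - kstar) ≤ a₁ * (k - kstar) :=
        mul_le_mul_of_nonneg_right S.h₁ hts
      rw [ha_def]; linarith
    have hgc : ContinuousOn (fun y => H k (h y) - y) (Set.Icc a kstar) :=
      ((hIco.mono hsub).sub continuousOn_id)
    have hiv := intermediate_value_Icc' hale hgc
    have h0mem : (0:ℝ) ∈ Set.Icc (H k (h kstar) - kstar) (H k (h a) - a) := by
      constructor
      · exact gk
      · linarith
    obtain ⟨y, hyIcc, hy0⟩ := hiv h0mem
    have hy0' : H k (h y) - y = 0 := hy0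
    refine ⟨y, hsub hyIcc, ?_, by linarith⟩
    · -- |y - kstar| ≤ |lam| * |k - kstar|
      have h1 : a ≤ y := hyIcc.1
      have h2 : y ≤ kstar := hyIcc.2
      rw [abs_of_nonpos (by linarith), abs_of_nonneg hts, S.absl_eq]
      rw [ha_def] at h1; nlinarith
  · -- k ≤ kstar, root in [kstar, kstar + lam*(k-kstar)]
    set b : ℝ := kstar + lam * (k - kstar) with hb_def
    have hts : 0 ≤ kstar - k := by linarith
    have hble : kstar ≤ b := by nlinarith [S.hlam₂]
    have hbI : b ∈ I := by
      rw [S.mem_iff]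
      rw [S.mem_iff] at hk
      have : |b - kstar| = -lam * (kstar - k) := by
        rw [hb_def]; rw [abs_of_nonneg (by nlinarith [S.hlam₂])]; ring
      rw [this]
      calc -lam * (kstar - k) ≤ 1 * ε := by
            apply mul_le_mul _ _ hts zero_le_one
            · linarith [S.hlam₁]
            · calc kstar - k ≤ |k - kstar| := by rw [abs_sub_comm]; exact le_abs_self _
                _ ≤ ε := hk
        _ = ε := one_mul ε
    have hsub : Set.Icc kstar b ⊆ I := by
      rw [S.hI]; apply Set.Icc_subset_Icc
      · linarith [S.hε]
      · rw [S.hI] at hbI; exact hbI.2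
    have gk : 0 ≤ H k (h kstar) - kstar := by
      rw [hh.2.2.1]
      have := (S.hHx kstar hkst kstar hkst k hk hkk).2
      rw [S.hHfix] at this
      nlinarith [S.h₃]
    have gb : H k (h b) ≤ b := by
      have h1 : h b ≤ kstar := by
        have := hh.2.1 hkst hbI hble
        rwa [hh.2.2.1] at this
      have h2 : 0 ≤ H k kstar - H k (h b) :=
        (S.hHz k hk kstar hkst (h b) (S.dhat_maps hh hbI) h1).1
      have h3 : H k kstar - kstar ≤ -(a₁ * (kstar - k)) := by
        have := (S.hHx kstar hkst kstar hkst k hk hkk).1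
        rw [S.hHfix] at this; linarith
      have h4 : lam * (kstar - k) ≤ a₁ * (kstar - k) :=
        mul_le_mul_of_nonneg_right S.h₁ hts
      rw [hb_def]; nlinarith
    have hgc : ContinuousOn (fun y => H k (h y) - y) (Set.Icc kstar b) :=
      ((hIco.mono hsub).sub continuousOn_id)
    have hiv := intermediate_value_Icc' hble hgc
    have h0mem : (0:ℝ) ∈ Set.Icc (H k (h b) - b) (H k (h kstar) - kstar) := by
      constructor
      · linarith
      · exact gk
    obtain ⟨y, hyIcc, hy0⟩ := hiv h0mem
    have hy0' : H k (h y) - y = 0 := hy0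
    refine ⟨y, hsub hyIcc, ?_, by linarith⟩
    · have h1 : kstar ≤ y := hyIcc.1
      have h2 : y ≤ b := hyIcc.2
      rw [abs_of_nonneg (by linarith), abs_sub_comm, abs_of_nonneg hts, S.absl_eq]
      rw [hb_def] at h2; nlinarith

end Setup

open scoped Classical in
/-- The operator `S`: `root H I kstar lam h k` is the unique `y ∈ I` with
`H k (h y) = y` (when it exists; junk value `kstar` otherwise). -/
noncomputable def root (H : ℝ → ℝ → ℝ) (I : Set ℝ) (kstar lam : ℝ)
    (h : ℝ → ℝ) (k : ℝ) : ℝ :=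
  if hc : ∃ y, y ∈ I ∧ |y - kstar| ≤ |lam| * |k - kstar| ∧ H k (h y) = y then
    hc.choose else kstar

namespace Setup

variable (S : Setup ε kstar lam a₁ m₁ m₂ I H)
include S

lemma root_spec {h : ℝ → ℝ} (hh : h ∈ Dhat I kstar lam) {k : ℝ} (hk : k ∈ I) :
    root H I kstar lam h k ∈ I ∧
    |root H I kstar lam h k - kstar| ≤ |lam| * |k - kstar| ∧
    H k (h (root H I kstar lam h k)) = root H I kstar lam h k := by
  have hc := S.exists_root hh hk
  rw [root, dif_pos hc]
  exact hc.choose_spec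

lemma root_eq_of {h : ℝ → ℝ} (hh : h ∈ Dhat I kstar lam) {k y : ℝ} (hk : k ∈ I)
    (hy : y ∈ I) (e : H k (h y) = y) : root H I kstar lam h k = y := by
  obtain ⟨m1, _, m3⟩ := S.root_spec hh hk
  exact S.root_unique' hh hk m1 hy m3 e

/-- Monotonicity and Lipschitz bound for the root in `k`. -/
lemma root_lip {h : ℝ → ℝ} (hh : h ∈ Dhat I kstar lam) {k k' : ℝ}
    (hk : k ∈ I) (hk' : k' ∈ I) (hle : k' ≤ k) :
    root H I kstar lam h k ≤ root H I kstar lam h k' ∧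
    root H I kstar lam h k' - root H I kstar lam h k ≤ |lam| * (k - k') := by
  obtain ⟨hyI, _, hyE⟩ := S.root_spec hh hk
  obtain ⟨hy'I, _, hy'E⟩ := S.root_spec hh hk'
  set y := root H I kstar lam h k
  set y' := root H I kstar lam h k'
  have hmain : y ≤ y' := by
    by_contra hcon
    push_neg at hcon  -- y' < y
    have hmono : h y ≤ h y' := hh.2.1 hy'I hyI (le_of_lt hcon)
    have e1 : 0 ≤ H k' (h y') - H k' (h y) :=
      (S.hHz k' hk' (h y') (S.dhat_maps hh hy'I) (h y) (S.dhat_maps hh hyI) hmono).1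
    have e2 : H k (h y) - H k' (h y) ≤ m₁ * (k - k') :=
      (S.hHx (h y) (S.dhat_maps hh hyI) k hk k' hk' hle).2
    have e3 : m₁ * (k - k') ≤ 0 := mul_nonpos_of_nonpos_of_nonneg (le_of_lt S.h₃) (by linarith)
    linarith [hyE, hy'E]
  constructor
  · exact hmain
  · have hmono : h y' ≤ h y := hh.2.1 hyI hy'I hmain
    have e1 : 0 ≤ H k' (h y) - H k' (h y') :=
      (S.hHz k' hk' (h y) (S.dhat_maps hh hyI) (h y') (S.dhat_maps hh hy'I) hmono).1
    have e2 : a₁ * (k - k') ≤ H k (h y) - H k' (h y) :=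
      (S.hHx (h y) (S.dhat_maps hh hyI) k hk k' hk' hle).1
    have e3 : lam * (k - k') ≤ a₁ * (k - k') :=
      mul_le_mul_of_nonneg_right S.h₁ (by linarith)
    rw [S.absl_eq]
    linarith [hyE, hy'E]

lemma root_mem {h : ℝ → ℝ} (hh : h ∈ Dhat I kstar lam) :
    root H I kstar lam h ∈ Dhat I kstar lam := by
  have hfix : root H I kstar lam h kstar = kstar := by
    have := (S.root_spec hh S.kstar_mem).2.1
    simp only [sub_self, abs_zero, mul_zero] at this
    have := abs_nonpos_iff.1 this
    linarith [abs_nonneg (root H I kstar lam h kstar - kstar), sub_eq_zero.1 this]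
  have hlip : ∀ k ∈ I, ∀ k' ∈ I,
      |root H I kstar lam h k - root H I kstar lam h k'| ≤ |lam| * |k - k'| := by
    intro k hk k' hk'
    rcases le_total k' k with hle | hle
    · obtain ⟨p, q⟩ := S.root_lip hh hk hk' hle
      rw [abs_of_nonpos (show root H I kstar lam h k - root H I kstar lam h k' ≤ 0 by linarith),
        abs_of_nonneg (show (0:ℝ) ≤ k - k' by linarith)]
      linarith
    · obtain ⟨p, q⟩ := S.root_lip hh hk' hk hle
      rw [abs_of_nonneg (show (0:ℝ) ≤ root H I kstar lam h k - root H I kstar lam h k' by linarith),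
        abs_sub_comm k k', abs_of_nonneg (show (0:ℝ) ≤ k' - k by linarith)]
      linarith
  refine ⟨?_, ?_, hfix, hlip⟩
  · -- continuity from the Lipschitz bound
    have : LipschitzOnWith (Real.toNNReal |lam|) (root H I kstar lam h) I := by
      apply LipschitzOnWith.of_dist_le_mul
      intro x hx y hy
      rw [Real.dist_eq, Real.dist_eq, Real.coe_toNNReal _ (abs_nonneg _)]
      exact hlip x hx y hy
    exact this.continuousOn
  · intro a ha b hb hab
    exact (S.root_lip hh hb ha hab).1

/-- The contraction estimate in the weighted metric. -/
lemma root_contract {g g' : ℝ → ℝ} (hg : g ∈ Dhat I kstar lam)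
    (hg' : g' ∈ Dhat I kstar lam) {A : ℝ} (hA0 : 0 ≤ A)
    (hA : ∀ z ∈ I, |g z - g' z| ≤ A * |z - kstar|) {k : ℝ} (hk : k ∈ I) :
    |root H I kstar lam g k - root H I kstar lam g' k| ≤
      m₂ * |lam| * A * |k - kstar| := by
  obtain ⟨hyI, hyB, hyE⟩ := S.root_spec hg hk
  obtain ⟨hy'I, hy'B, hy'E⟩ := S.root_spec hg' hk
  set y := root H I kstar lam g k
  set y' := root H I kstar lam g' k
  have key : ∀ (u u' : ℝ → ℝ) (v v' : ℝ), u ∈ Dhat I kstar lam → u' ∈ Dhat I kstar lam →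
      v ∈ I → v' ∈ I → |v' - kstar| ≤ |lam| * |k - kstar| →
      H k (u v) = v → H k (u' v') = v' →
      (∀ z ∈ I, |u z - u' z| ≤ A * |z - kstar|) →
      v' ≤ v → v - v' ≤ m₂ * |lam| * A * |k - kstar| := by
    intro u u' v v' hu hu' hv hv' hv'B ev ev' hAu hle
    have hmono : u v ≤ u v' := hu.2.1 hv' hv hle
    have e1 : 0 ≤ H k (u v') - H k (u v) :=
      (S.hHz k hk (u v') (S.dhat_maps hu hv') (u v) (S.dhat_maps hu hv) hmono).1
    have e2 : H k (u v') - H k (u' v') ≤ m₂ * |u v' - u' v'| := by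
      rcases le_total (u' v') (u v') with hc | hc
      · have := (S.hHz k hk (u v') (S.dhat_maps hu hv') (u' v') (S.dhat_maps hu' hv') hc).2
        calc H k (u v') - H k (u' v') ≤ m₂ * (u v' - u' v') := this
          _ ≤ m₂ * |u v' - u' v'| :=
            mul_le_mul_of_nonneg_left (le_abs_self _) (le_of_lt S.h₄)
      · have := (S.hHz k hk (u' v') (S.dhat_maps hu' hv') (u v') (S.dhat_maps hu hv') hc).1
        have h0 : 0 ≤ m₂ * |u v' - u' v'| :=
          mul_nonneg (le_of_lt S.h₄) (abs_nonneg _)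
        linarith
    have e3 : |u v' - u' v'| ≤ A * |v' - kstar| := hAu v' hv'
    have e4 : A * |v' - kstar| ≤ A * (|lam| * |k - kstar|) :=
      mul_le_mul_of_nonneg_left hv'B hA0
    have e5 : m₂ * |u v' - u' v'| ≤ m₂ * (A * (|lam| * |k - kstar|)) := by
      apply mul_le_mul_of_nonneg_left _ (le_of_lt S.h₄)
      linarith
    have : v - v' ≤ m₂ * |u v' - u' v'| := by linarith [ev, ev']
    calc v - v' ≤ m₂ * (A * (|lam| * |k - kstar|)) := by linarith
      _ = m₂ * |lam| * A * |k - kstar| := by ring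
  rcases le_total y' y with hle | hle
  · rw [abs_of_nonneg (by linarith)]
    exact key g g' y y' hg hg' hyI hy'I hy'B hyE hy'E hA hle
  · rw [abs_of_nonpos (by linarith)]
    have hA' : ∀ z ∈ I, |g' z - g z| ≤ A * |z - kstar| := by
      intro z hz; rw [abs_sub_comm]; exact hA z hz
    have := key g' g y' y hg' hg hy'I hyI hyB hy'E hyE hA' hle
    linarith

end Setup

end T17aux

/-- Theorem `fixedpT`: the operator `T h = H (·, h (h ·))` has a
fixed point in `D̂_{|λ|}(I)`, i.e. a stationary Markov equilibrium savings
function exists (via Schauder's fixed point theorem). -/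
theorem T_has_fixed_point
    (ε kstar lam a₁ m₁ m₂ : ℝ) (I : Set ℝ) (H : ℝ → ℝ → ℝ)
    (hε : 0 < ε) (hI : I = Set.Icc (kstar - ε) (kstar + ε))
    (hlam : lam ∈ Set.Ioo (-1 : ℝ) 0)
    (h₁ : lam ≤ a₁) (h₂ : a₁ ≤ m₁) (h₃ : m₁ < 0) (h₄ : 0 < m₂)
    (h₅ : m₁ + m₂ * lam ^ 2 < 0)
    (hHc : ContinuousOn (fun q : ℝ × ℝ => H q.1 q.2) (I ×ˢ I))
    (hHfix : H kstar kstar = kstar)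
    (hHx : ∀ z ∈ I, ∀ x ∈ I, ∀ x' ∈ I, x' ≤ x →
      a₁ * (x - x') ≤ H x z - H x' z ∧ H x z - H x' z ≤ m₁ * (x - x'))
    (hHz : ∀ x ∈ I, ∀ z ∈ I, ∀ z' ∈ I, z' ≤ z →
      0 ≤ H x z - H x z' ∧ H x z - H x z' ≤ m₂ * (z - z')) :
    ∃ hstar ∈ Dhat I kstar lam, ∀ k ∈ I, H k (hstar (hstar k)) = hstar k := by
  classical
  open Filter Topology in
  obtain ⟨hlam₁, hlam₂⟩ := hlam
  have S : T17aux.Setup ε kstar lam a₁ m₁ m₂ I H :=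
    ⟨hε, hI, hlam₁, hlam₂, h₁, h₂, h₃, h₄, h₅, hHc, hHfix, hHx, hHz⟩
  set seq : ℕ → ℝ → ℝ := fun n => (T17aux.root H I kstar lam)^[n] (fun _ => kstar)
    with hseq_def
  have seq_zero : seq 0 = (fun _ : ℝ => kstar) := rfl
  have seq_succ : ∀ n, seq (n + 1) = T17aux.root H I kstar lam (seq n) := by
    intro n
    simp only [hseq_def, Function.iterate_succ_apply']
  have const_mem : (fun _ : ℝ => kstar) ∈ Dhat I kstar lam := by
    refine ⟨continuousOn_const, fun a _ b _ _ => le_refl _, rfl, ?_⟩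
    intro k hk k' hk'
    simp only [sub_self, abs_zero]
    exact mul_nonneg (abs_nonneg _) (abs_nonneg _)
  have seq_mem : ∀ n, seq n ∈ Dhat I kstar lam := by
    intro n
    induction n with
    | zero => rw [seq_zero]; exact const_mem
    | succ n ih => rw [seq_succ]; exact S.root_mem ih
  set q : ℝ := m₂ * |lam| with hq_def
  have hq0 : 0 ≤ q := mul_nonneg (le_of_lt h₄) (abs_nonneg _)
  have hq1 : q < 1 := by
    rw [hq_def, S.absl_eq]
    nlinarith [h₅, h₁, h₂, hlam₂, sq_nonneg lam]
  set C : ℝ := |lam| * ε with hC_def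
  have key : ∀ n, ∀ k ∈ I, |seq (n + 1) k - seq n k| ≤ |lam| * q ^ n * |k - kstar| := by
    intro n
    induction n with
    | zero =>
      intro k hk
      have hb := (S.root_spec const_mem hk).2.1
      rw [seq_succ 0, seq_zero]
      simpa using hb
    | succ n ih =>
      intro k hk
      have hc := S.root_contract (seq_mem (n + 1)) (seq_mem n)
        (mul_nonneg (abs_nonneg lam) (pow_nonneg hq0 n)) (fun z hz => ih z hz) hk
      rw [← seq_succ n, ← seq_succ (n + 1)] at hc
      have e : m₂ * |lam| * (|lam| * q ^ n) * |k - kstar|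
          = |lam| * q ^ (n + 1) * |k - kstar| := by rw [hq_def]; ring
      linarith
  have dist_bound : ∀ k ∈ I, ∀ n, dist (seq n k) (seq (n + 1) k) ≤ C * q ^ n := by
    intro k hk n
    rw [Real.dist_eq, abs_sub_comm]
    calc |seq (n + 1) k - seq n k| ≤ |lam| * q ^ n * |k - kstar| := key n k hk
      _ ≤ |lam| * q ^ n * ε := by
          apply mul_le_mul_of_nonneg_left _ (mul_nonneg (abs_nonneg _) (pow_nonneg hq0 n))
          exact (S.mem_iff).1 hk
      _ = C * q ^ n := by rw [hC_def]; ring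
  have hex : ∀ k, ∃ L, (k ∈ I → Tendsto (fun n => seq n k) atTop (𝓝 L)) := by
    intro k
    by_cases hk : k ∈ I
    · obtain ⟨L, hL⟩ := cauchySeq_tendsto_of_complete
        (cauchySeq_of_le_geometric q C hq1 (dist_bound k hk))
      exact ⟨L, fun _ => hL⟩
    · exact ⟨kstar, fun h => absurd h hk⟩
  choose hst hts using hex
  have unif : ∀ n, ∀ k ∈ I, |seq n k - hst k| ≤ C * q ^ n / (1 - q) := by
    intro n k hk
    have := dist_le_of_le_geometric_of_tendsto q C hq1 (dist_bound k hk) (hts k hk) n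
    rwa [Real.dist_eq] at this
  have hst_fix : hst kstar = kstar := by
    have hconst : ∀ n, seq n kstar = kstar := fun n => (seq_mem n).2.2.1
    have h1 := hts kstar S.kstar_mem
    simp only [hconst] at h1
    exact tendsto_nhds_unique h1 tendsto_const_nhds
  have hst_lip : ∀ k ∈ I, ∀ k' ∈ I, |hst k - hst k'| ≤ |lam| * |k - k'| := by
    intro k hk k' hk'
    have h1 : Tendsto (fun n => |seq n k - seq n k'|) atTop (𝓝 |hst k - hst k'|) :=
      ((hts k hk).sub (hts k' hk')).abs
    exact le_of_tendsto h1 (Filter.Eventually.of_forall fun n => (seq_mem n).2.2.2 k hk k' hk')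
  have hst_anti : AntitoneOn hst I := by
    intro a ha b hb hab
    exact le_of_tendsto_of_tendsto' (hts b hb) (hts a ha)
      (fun n => (seq_mem n).2.1 ha hb hab)
  have hst_cont : ContinuousOn hst I := by
    have hl : LipschitzOnWith (Real.toNNReal |lam|) hst I := by
      apply LipschitzOnWith.of_dist_le_mul
      intro x hx y hy
      rw [Real.dist_eq, Real.dist_eq, Real.coe_toNNReal _ (abs_nonneg _)]
      exact hst_lip x hx y hy
    exact hl.continuousOn
  have hst_mem : hst ∈ Dhat I kstar lam := ⟨hst_cont, hst_anti, hst_fix, hst_lip⟩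
  refine ⟨hst, hst_mem, ?_⟩
  intro k hk
  have hstk_mem : hst k ∈ I := S.dhat_maps hst_mem hk
  have hstk2_mem : hst (hst k) ∈ I := S.dhat_maps hst_mem hstk_mem
  have hseqk : ∀ n, seq (n + 1) k ∈ I := by
    intro n
    rw [seq_succ]
    exact (S.root_spec (seq_mem n) hk).1
  have hz_eq : ∀ n, H k (seq n (seq (n + 1) k)) = seq (n + 1) k := by
    intro n
    conv_rhs => rw [seq_succ]
    rw [seq_succ]
    exact (S.root_spec (seq_mem n) hk).2.2
  have hzmem : ∀ n, seq n (seq (n + 1) k) ∈ I := fun n =>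
    S.dhat_maps (seq_mem n) (hseqk n)
  have l1 : Tendsto (fun n => seq (n + 1) k) atTop (𝓝 (hst k)) :=
    (hts k hk).comp (tendsto_add_atTop_nat 1)
  have hZtend : Tendsto (fun n => seq n (seq (n + 1) k)) atTop (𝓝 (hst (hst k))) := by
    rw [tendsto_iff_dist_tendsto_zero]
    apply squeeze_zero (g := fun n => |lam| * |seq (n + 1) k - hst k| + C * q ^ n / (1 - q))
      (fun n => dist_nonneg)
    · intro n
      rw [Real.dist_eq]
      have t1 : |seq n (seq (n + 1) k) - seq n (hst k)| ≤ |lam| * |seq (n + 1) k - hst k| :=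
        (seq_mem n).2.2.2 _ (hseqk n) _ hstk_mem
      have t2 : |seq n (hst k) - hst (hst k)| ≤ C * q ^ n / (1 - q) := unif n _ hstk_mem
      calc |seq n (seq (n + 1) k) - hst (hst k)|
          ≤ |seq n (seq (n + 1) k) - seq n (hst k)| + |seq n (hst k) - hst (hst k)| :=
            abs_sub_le _ _ _
        _ ≤ |lam| * |seq (n + 1) k - hst k| + C * q ^ n / (1 - q) := by linarith
    · have l2 : Tendsto (fun n => |lam| * |seq (n + 1) k - hst k|) atTop
          (𝓝 (|lam| * |hst k - hst k|)) :=
        ((l1.sub tendsto_const_nhds).abs).const_mul _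
      simp only [sub_self, abs_zero, mul_zero] at l2
      have l3 : Tendsto (fun n : ℕ => C * q ^ n / (1 - q)) atTop (𝓝 0) := by
        have t := tendsto_pow_atTop_nhds_zero_of_lt_one hq0 hq1
        have t2 := (t.const_mul C).div_const (1 - q)
        simpa using t2
      simpa using l2.add l3
  have final1 : Tendsto (fun n => H k (seq n (seq (n + 1) k))) atTop
      (𝓝 (H k (hst (hst k)))) := by
    have cwa : ContinuousWithinAt (fun p : ℝ × ℝ => H p.1 p.2) (I ×ˢ I) (k, hst (hst k)) :=
      hHc (k, hst (hst k)) ⟨hk, hstk2_mem⟩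
    have pt : Tendsto (fun n => ((k, seq n (seq (n + 1) k)) : ℝ × ℝ)) atTop
        (𝓝[I ×ˢ I] (k, hst (hst k))) := by
      rw [tendsto_nhdsWithin_iff]
      constructor
      · exact tendsto_const_nhds.prodMk_nhds hZtend
      · exact Filter.Eventually.of_forall fun n => ⟨hk, hzmem n⟩
    exact cwa.tendsto.comp pt
  have final2 : Tendsto (fun n => H k (seq n (seq (n + 1) k))) atTop (𝓝 (hst k)) := by
    simp only [hz_eq]
    exact l1
  exact tendsto_nhds_unique final1 final2
end
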